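/- Let ρ_s(t), D(t), s(t), T(t) satisfy: ρ̇_s + (Ḋ/(D+1))ρ_s = q, T(ṡ + (Ḋ/(D+1))s) = -q·e(D), ρ_s e'(D)(D+1) = F, and let ρ_b satisfy ρ_s + ρ_b = ϱ₀/(D+1), with total energy density ε = (ρ_s+ρ_b)e_t(η) + ρ_s e(D), T = e_t'(η), s = (ρ_s+ρ_b)η. Then dε/dt + (Ḋ/(D+1))ε = (Ḋ/(D+1))F. -/

import Mathlib

/-- Energy balance for the one-dimensional quasi-static thermoelastic breaking model:
along solutions of `ρ̇_s + (Ḋ/(D+1))ρ_s = q`, `T(ṡ + (Ḋ/(D+1))s) = -q e(D)`,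
`ρ_s e'(D)(D+1) = F`, with `ρ_s + ρ_b = ϱ₀/(D+1)`, `T = e_t'(η)`, `s = (ρ_s+ρ_b)η`,
the total energy density `ε = (ρ_s+ρ_b)e_t(η) + ρ_s e(D)` satisfies
`dε/dt + (Ḋ/(D+1))ε = (Ḋ/(D+1))F`. -/
theorem energy_balance_1D
    (ϱ₀ F : ℝ) (hϱ : 0 < ϱ₀)
    (et det : ℝ → ℝ) (hdet : ∀ x, HasDerivAt et (det x) x)
    (e de : ℝ → ℝ) (hde : ∀ x, HasDerivAt e (de x) x)
    (ρs ρb D s T η q : ℝ → ℝ) (ρs' D' s' η' : ℝ → ℝ)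
    (hDdom : ∀ t, -1 < D t) (hTpos : ∀ t, 0 < T t)
    (hρs : ∀ t, HasDerivAt ρs (ρs' t) t)
    (hD : ∀ t, HasDerivAt D (D' t) t)
    (hs : ∀ t, HasDerivAt s (s' t) t)
    (hη : ∀ t, HasDerivAt η (η' t) t)
    (hdens : ∀ t, ρs' t + (D' t / (D t + 1)) * ρs t = q t)
    (hentropy : ∀ t, T t * (s' t + (D' t / (D t + 1)) * s t) = -(q t) * e (D t))
    (hforce : ∀ t, ρs t * de (D t) * (D t + 1) = F)
    (hmass : ∀ t, ρs t + ρb t = ϱ₀ / (D t + 1))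
    (hT : ∀ t, T t = det (η t))
    (hsdef : ∀ t, s t = (ρs t + ρb t) * η t) :
    ∀ t, HasDerivAt (fun τ => (ρs τ + ρb τ) * et (η τ) + ρs τ * e (D τ))
      ((D' t / (D t + 1)) * F
        - (D' t / (D t + 1)) * ((ρs t + ρb t) * et (η t) + ρs t * e (D t))) t := by
  intro t
  have hP : (0:ℝ) < D t + 1 := by linarith [hDdom t]
  have hPne : D t + 1 ≠ 0 := ne_of_gt hP
  have hfun : (fun τ => (ρs τ + ρb τ) * et (η τ) + ρs τ * e (D τ))
      = fun τ => ϱ₀ / (D τ + 1) * et (η τ) + ρs τ * e (D τ) := by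
    funext τ; rw [hmass τ]
  have hsfun : s = fun τ => ϱ₀ / (D τ + 1) * η τ := by
    funext τ; rw [hsdef τ, hmass τ]
  -- derivative of ρ := ϱ₀/(D+1)
  have hρ : ∀ u, HasDerivAt (fun τ => ϱ₀ / (D τ + 1)) (-(ϱ₀ * D' u) / (D u + 1)^2) u := by
    intro u
    have h1 : HasDerivAt (fun τ => D τ + 1) (D' u) u := (hD u).add_const 1
    have hne : D u + 1 ≠ 0 := ne_of_gt (by linarith [hDdom u])
    have : HasDerivAt (fun τ => ϱ₀ / (D τ + 1)) ((0 * (D u + 1) - ϱ₀ * D' u) / (D u + 1)^2) u :=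
      (hasDerivAt_const u ϱ₀).div h1 hne
    convert this using 1
    ring
  -- derivative of s via the formula
  have hs2 : HasDerivAt s (-(ϱ₀ * D' t) / (D t + 1)^2 * η t + ϱ₀ / (D t + 1) * η' t) t := by
    rw [hsfun]
    exact (hρ t).mul (hη t)
  have hseq : s' t = -(ϱ₀ * D' t) / (D t + 1)^2 * η t + ϱ₀ / (D t + 1) * η' t :=
    (hs t).unique hs2
  -- key entropy identity
  have hkey : det (η t) * (ϱ₀ / (D t + 1) * η' t) = -(q t) * e (D t) := by
    have h := hentropy t
    rw [hT t, hseq, hsdef t, hmass t] at h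
    have h2 : s' t + D' t / (D t + 1) * s t = ϱ₀ / (D t + 1) * η' t := by
      rw [hseq, hsdef t, hmass t]
      field_simp
      ring
    calc det (η t) * (ϱ₀ / (D t + 1) * η' t)
        = det (η t) * (-(ϱ₀ * D' t) / (D t + 1)^2 * η t + ϱ₀ / (D t + 1) * η' t
            + D' t / (D t + 1) * (ϱ₀ / (D t + 1) * η t)) := by
          field_simp; ring
      _ = -(q t) * e (D t) := h
  -- assemble the derivative
  have hderiv : HasDerivAt (fun τ => ϱ₀ / (D τ + 1) * et (η τ) + ρs τ * e (D τ))
      (-(ϱ₀ * D' t) / (D t + 1)^2 * et (η t) + ϱ₀ / (D t + 1) * (det (η t) * η' t)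
        + (ρs' t * e (D t) + ρs t * (de (D t) * D' t))) t := by
    have het : HasDerivAt (fun τ => et (η τ)) (det (η t) * η' t) t :=
      (hdet (η t)).comp t (hη t)
    have heD : HasDerivAt (fun τ => e (D τ)) (de (D t) * D' t) t :=
      (hde (D t)).comp t (hD t)
    exact ((hρ t).mul het).add ((hρs t).mul heD)
  rw [hfun, hmass t]
  convert hderiv using 1
  have hd := hdens t
  have hf := hforce t
  have hρs'eq : ρs' t = q t - D' t / (D t + 1) * ρs t := by linarith
  rw [hρs'eq]
  have hk : ϱ₀ / (D t + 1) * (det (η t) * η' t) = -(q t) * e (D t) := by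
    rw [← hkey]; ring
  rw [hk]
  have hF : ρs t * (de (D t) * D' t) = D' t / (D t + 1) * F := by
    rw [← hf]; field_simp
  rw [hF]
  field_simp
  ring
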